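/- Let x be a type and let R ∈ Det(x) be a deterministic event of type x. Then the transpose Rᵀ (with respect to the fixed basis used in the Choi isomorphism) is also a deterministic event of type x; that is, R ∈ Det(x) ⟺ Rᵀ ∈ Det(x). -/

import Mathlib

open Matrix Kronecker
open scoped ComplexOrder

/-- Types of higher-order quantum theory. The trivial type `I` is `elem 1`. -/
inductive QT where
  | elem (n : ℕ)
  | arrow (x y : QT)

/-- The index type of the Hilbert space `H_x` associated to a type `x`. -/
def Idx : QT → Type
  | .elem n => Fin n
  | .arrow x y => Idx x × Idx y

instance idxFintype : (x : QT) → Fintype (Idx x)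
  | .elem n => inferInstanceAs (Fintype (Fin n))
  | .arrow x y =>
      letI := idxFintype x; letI := idxFintype y
      inferInstanceAs (Fintype (Idx x × Idx y))

instance idxDecEq : (x : QT) → DecidableEq (Idx x)
  | .elem n => inferInstanceAs (DecidableEq (Fin n))
  | .arrow x y =>
      letI := idxDecEq x; letI := idxDecEq y
      inferInstanceAs (DecidableEq (Idx x × Idx y))

/-- Partial trace over the first tensor factor. -/
noncomputable def ptrA {ι κ : Type} [Fintype ι]
    (M : Matrix (ι × κ) (ι × κ) ℂ) : Matrix κ κ ℂ :=
  fun k l => ∑ i : ι, M (i, k) (i, l)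

/-- Deterministic events of type `x`, defined recursively: for elementary types,
positive unit-trace operators; for `x → y`, positive operators `R` such that
`Tr_x[(Sᵀ ⊗ 1) R] ∈ Det y` for every `S ∈ Det x`. -/
noncomputable def Det : (x : QT) → Set (Matrix (Idx x) (Idx x) ℂ)
  | .elem n => {R | R.PosSemidef ∧ R.trace = 1}
  | .arrow x y =>
      setOf (fun (R : Matrix (Idx x × Idx y) (Idx x × Idx y) ℂ) =>
        R.PosSemidef ∧
        ∀ S ∈ Det x, ptrA ((Sᵀ ⊗ₖ (1 : Matrix (Idx y) (Idx y) ℂ)) * R) ∈ Det y)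

/-! Transposition preserves positivity and trace. For an arrow type, the partial trace over the
first factor is cyclic against operators `S ⊗ 1`, so `Tr_x[(Sᵀ ⊗ 1) Rᵀ] = (Tr_x[(S ⊗ 1) R])ᵀ`.
By induction `S ↦ Sᵀ` maps `Det x` into itself and `Det y` is closed under transposition, hence
`Rᵀ` passes every test that `R` passes. -/

section PartialTrace

variable {ι κ : Type} [Fintype ι]

theorem ptrA_transpose (M : Matrix (ι × κ) (ι × κ) ℂ) : ptrA Mᵀ = (ptrA M)ᵀ := rfl

theorem ptrA_mul_kronecker_one_comm [Fintype κ] [DecidableEq κ] (M : Matrix (ι × κ) (ι × κ) ℂ)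
    (A : Matrix ι ι ℂ) :
    ptrA (M * (A ⊗ₖ (1 : Matrix κ κ ℂ))) = ptrA ((A ⊗ₖ (1 : Matrix κ κ ℂ)) * M) := by
  ext k l
  simp only [ptrA, mul_apply, kroneckerMap_apply, one_apply, Fintype.sum_prod_type, mul_ite,
    mul_one, mul_zero, ite_mul, zero_mul, Finset.sum_ite_eq, Finset.sum_ite_eq',
    Finset.mem_univ, if_true]
  rw [Finset.sum_comm]
  simp only [mul_comm]

theorem ptrA_transpose_kronecker_one_mul_transpose [Fintype κ] [DecidableEq κ]
    (S : Matrix ι ι ℂ) (R : Matrix (ι × κ) (ι × κ) ℂ) :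
    ptrA ((Sᵀ ⊗ₖ (1 : Matrix κ κ ℂ)) * Rᵀ) = (ptrA ((S ⊗ₖ (1 : Matrix κ κ ℂ)) * R))ᵀ := by
  rw [← transpose_one, kroneckerMap_transpose, ← transpose_mul, ptrA_transpose,
    ptrA_mul_kronecker_one_comm, transpose_one]

end PartialTrace

theorem transpose_mem_Det : ∀ (x : QT) {R : Matrix (Idx x) (Idx x) ℂ}, R ∈ Det x → Rᵀ ∈ Det x
  | .elem _, _, ⟨hR, htr⟩ => ⟨hR.transpose, by rwa [trace_transpose]⟩
  | .arrow x y, R, ⟨hR, hdet⟩ => ⟨hR.transpose, fun S hS => by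
      have h := transpose_transpose S ▸ hdet Sᵀ (transpose_mem_Det x hS)
      exact (ptrA_transpose_kronecker_one_mul_transpose S R).symm ▸ transpose_mem_Det y h⟩

/-- Transpose of a deterministic event: `R ∈ Det(x) ⟺ Rᵀ ∈ Det(x)`. -/
theorem det_transpose (x : QT) (R : Matrix (Idx x) (Idx x) ℂ) :
    R ∈ Det x ↔ Rᵀ ∈ Det x :=
  ⟨transpose_mem_Det x, fun h => transpose_transpose R ▸ transpose_mem_Det x h⟩
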